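/- arXiv:1705.02863 — 4 statements merged into one kernel-verified Lean document; each statement's English description precedes it below -/
import Mathlib

section
/- The sequence of harmonic numbers h(n) = ∑_{i=1}^n 1/i is not hypergeometric: there is no rational function r ∈ ℚ(x) such that h(n+1) = r(n)·h(n) for all sufficiently large n. -/
/-!
If `h (n + 1) = r n * h n` with `r = P / Q`, subtracting `h (n + 1) = h n + 1 / (n + 1)` gives
`h n = Q n / ((n + 1) * (P n - Q n))` for large `n`, so `h` eventually agrees with a rational
function. But `h n = log n + O(1)` tends to infinity while `h n / n → 0`, and no rational function
does both: diverging forces the numerator to have larger degree than the denominator, and then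
dividing by `n` still leaves a nonzero limit or divergence.
-/

open Filter Polynomial Topology

namespace Polynomial

theorem eventually_eval_natCast_ne_zero {R : Type*} [CommRing R] [IsDomain R] [CharZero R]
    {P : R[X]} (hP : P ≠ 0) : ∀ᶠ n : ℕ in atTop, P.eval (n : R) ≠ 0 := by
  rw [← Nat.cofinite_eq_atTop]
  exact Nat.cast_injective.tendsto_cofinite.eventually (eventually_cofinite_not_isRoot hP)

theorem degree_lt_of_tendsto_div_atTop {P Q : ℝ[X]}
    (h : Tendsto (fun n : ℕ => P.eval (n : ℝ) / Q.eval (n : ℝ)) atTop atTop) :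
    Q.degree < P.degree := by
  by_contra! hle
  obtain ⟨c, hc⟩ : ∃ c, Tendsto (fun x => P.eval x / Q.eval x) atTop (𝓝 c) := by
    rcases hle.lt_or_eq with hlt | heq
    · exact ⟨0, div_tendsto_atTop_zero_of_degree_lt P Q hlt⟩
    · exact ⟨_, div_tendsto_atTop_leadingCoeff_div_of_degree_eq P Q heq⟩
  exact not_tendsto_atTop_of_tendsto_nhds (hc.comp tendsto_natCast_atTop_atTop) h

theorem not_tendsto_div_zero_of_degree_le {P Q : ℝ[X]} (hQ : Q ≠ 0) (h : Q.degree ≤ P.degree) :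
    ¬ Tendsto (fun n : ℕ => P.eval (n : ℝ) / Q.eval (n : ℝ)) atTop (𝓝 0) := by
  intro h0
  rcases h.lt_or_eq with hlt | heq
  · have := abs_div_tendsto_atTop_atTop_of_degree_gt P Q hlt hQ
    exact not_tendsto_atTop_of_tendsto_nhds h0.abs (this.comp tendsto_natCast_atTop_atTop)
  · have hP : P ≠ 0 := by
      rintro rfl
      exact hQ (degree_eq_bot.mp (by simpa using heq))
    have := div_tendsto_atTop_leadingCoeff_div_of_degree_eq P Q heq.symm
    exact div_ne_zero (leadingCoeff_ne_zero.mpr hP) (leadingCoeff_ne_zero.mpr hQ)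
      (tendsto_nhds_unique (this.comp tendsto_natCast_atTop_atTop) h0)

theorem not_eventually_eq_div_of_tendsto_atTop {f : ℕ → ℝ} (hf : Tendsto f atTop atTop)
    (hf_div : Tendsto (fun n => f n / n) atTop (𝓝 0)) (P Q : ℝ[X]) :
    ¬ ∀ᶠ n : ℕ in atTop, f n = P.eval (n : ℝ) / Q.eval (n : ℝ) := by
  intro hPQ
  have hQ : Q ≠ 0 := by
    rintro rfl
    have := hf.congr' hPQ
    simp only [eval_zero, div_zero] at this
    exact not_tendsto_atTop_of_tendsto_nhds tendsto_const_nhds this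
  have hdeg : (Q * X).degree ≤ P.degree := by
    rw [degree_mul_X]
    exact Nat.WithBot.add_one_le_of_lt (degree_lt_of_tendsto_div_atTop (hf.congr' hPQ))
  refine not_tendsto_div_zero_of_degree_le (mul_ne_zero hQ X_ne_zero) hdeg (hf_div.congr' ?_)
  filter_upwards [hPQ] with n hn
  rw [hn, eval_mul, eval_X, div_div]

end Polynomial

theorem tendsto_harmonic_atTop : Tendsto (fun n : ℕ => (harmonic n : ℝ)) atTop atTop := by
  simpa using Real.tendsto_harmonic_sub_log.add_atTop
    (Real.tendsto_log_atTop.comp tendsto_natCast_atTop_atTop)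

theorem tendsto_harmonic_div_natCast_zero :
    Tendsto (fun n : ℕ => (harmonic n : ℝ) / n) atTop (𝓝 0) := by
  have hlog : Tendsto (fun n : ℕ => Real.log n / n) atTop (𝓝 0) :=
    Real.isLittleO_log_id_atTop.tendsto_div_nhds_zero.comp tendsto_natCast_atTop_atTop
  have hconst := Real.tendsto_harmonic_sub_log.div_atTop tendsto_natCast_atTop_atTop
  simpa [sub_div] using hconst.add hlog

theorem harmonic_eventually_eq_div_of_hypergeometric {r : RatFunc ℚ}
    (hr : ∀ᶠ n : ℕ in atTop, harmonic (n + 1) = r.eval (RingHom.id ℚ) n * harmonic n) :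
    ∀ᶠ n : ℕ in atTop,
      harmonic n = r.denom.eval (n : ℚ) / ((X + 1) * (r.num - r.denom)).eval (n : ℚ) := by
  filter_upwards [hr, eventually_eval_natCast_ne_zero r.denom_ne_zero] with n hn hdenom
  have hrel : ((X + 1) * (r.num - r.denom)).eval (n : ℚ) * harmonic n = r.denom.eval (n : ℚ) := by
    rw [harmonic_succ, RatFunc.eval, eval₂_id, eval₂_id] at hn
    simp only [eval_mul, eval_sub, eval_add, eval_X, eval_one]
    field_simp at hn
    push_cast at hn
    linear_combination -hn
  exact eq_div_of_mul_eq (left_ne_zero_of_mul (hrel ▸ hdenom)) (by rw [mul_comm, hrel])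

/-- The harmonic numbers are not hypergeometric over ℚ. -/
theorem harmonic_not_hypergeometric
    (h : ℕ → ℚ) (hh : ∀ n, h n = ∑ i ∈ Finset.range n, (1 : ℚ) / (i + 1)) :
    ¬ ∃ r : RatFunc ℚ, ∀ᶠ n : ℕ in atTop,
      h (n + 1) = r.eval (RingHom.id ℚ) (n : ℚ) * h n := by
  obtain rfl : h = harmonic := funext fun n => by simp [hh, harmonic]
  rintro ⟨r, hr⟩
  refine not_eventually_eq_div_of_tendsto_atTop tendsto_harmonic_atTop
    tendsto_harmonic_div_natCast_zero (r.denom.map (Rat.castHom ℝ))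
    (((X + 1) * (r.num - r.denom)).map (Rat.castHom ℝ)) ?_
  filter_upwards [harmonic_eventually_eq_div_of_hypergeometric hr] with n hn
  simp [hn]
end

section
/- The sequence of harmonic numbers h(n) = ∑_{i=1}^n 1/i is not C-finite: it satisfies no linear recurrence with constant rational coefficients, i.e., there are no d ≥ 1 and c₀,…,c_{d−1} ∈ ℚ with h(n+d) = c_{d−1}h(n+d−1) + ⋯ + c₀h(n) for all n. -/
/-!
The forward difference of a solution of a linear recurrence with constant coefficients solves the
same recurrence, and the forward difference of the harmonic numbers is `1 / (n + 1)`. So it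
suffices that `1 / (n + d + 1) = ∑_{i < d} c i / (n + i + 1)` cannot hold for all `n`. Clearing
denominators turns this into a polynomial identity valid at every natural number, hence
identically; but at `x = -(d + 1)` the left side vanishes while the right side does not.
-/

open Polynomial Finset

namespace Polynomial

theorem eq_zero_of_forall_eval_natCast_eq_zero {R : Type*} [CommRing R] [IsDomain R] [CharZero R]
    {p : R[X]} (h : ∀ n : ℕ, p.eval (n : R) = 0) : p = 0 :=
  p.eq_zero_of_infinite_isRoot <|
    (Set.infinite_range_of_injective Nat.cast_injective).mono <| by
      rintro _ ⟨n, rfl⟩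
      exact h n

end Polynomial

section PartialFractions

variable {K ι : Type*} [Field K] [DecidableEq ι] (s : Finset ι) (a : K) (b c : ι → K)

theorem prod_eq_mul_sum_mul_prod_erase {x : K} (ha : x + a ≠ 0) (hb : ∀ i ∈ s, x + b i ≠ 0)
    (h : (x + a)⁻¹ = ∑ i ∈ s, c i * (x + b i)⁻¹) :
    ∏ i ∈ s, (x + b i) = (x + a) * ∑ i ∈ s, c i * ∏ j ∈ s.erase i, (x + b j) :=
  calc ∏ i ∈ s, (x + b i)
      = (x + a) * (x + a)⁻¹ * ∏ i ∈ s, (x + b i) := by rw [mul_inv_cancel₀ ha, one_mul]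
    _ = (x + a) * ∑ i ∈ s, c i * ((x + b i)⁻¹ * ∏ j ∈ s, (x + b j)) := by
        rw [h, mul_assoc, sum_mul]
        simp only [mul_assoc]
    _ = (x + a) * ∑ i ∈ s, c i * ∏ j ∈ s.erase i, (x + b j) := by
        congr 1
        refine sum_congr rfl fun i hi => ?_
        rw [← mul_prod_erase s (fun j => x + b j) hi, inv_mul_cancel_left₀ (hb i hi)]

variable [CharZero K]

/-- Partial fractions with distinct poles are linearly independent, already on `ℕ`. -/
theorem not_forall_inv_add_eq_sum_mul_inv_add (hab : ∀ i ∈ s, b i ≠ a) :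
    ¬ ∀ n : ℕ, ((n : K) + a)⁻¹ = ∑ i ∈ s, c i * ((n : K) + b i)⁻¹ := by
  intro hsum
  set Q : K[X] := ∏ i ∈ s, (X + C (b i))
  set P : K[X] := Q - (X + C a) * ∑ i ∈ s, C (c i) * ∏ j ∈ s.erase i, (X + C (b j))
  have hDP : ((X + C a) * Q) * P = 0 := by
    refine eq_zero_of_forall_eval_natCast_eq_zero fun n => ?_
    by_cases hD : ((X + C a) * Q).eval (n : K) = 0
    · rw [eval_mul, hD, zero_mul]
    · simp only [Q, eval_mul, eval_add, eval_X, eval_C, eval_prod, mul_ne_zero_iff,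
        prod_ne_zero_iff] at hD
      simp only [P, Q, eval_mul, eval_sub, eval_add, eval_X, eval_C, eval_prod, eval_finsetSum,
        prod_eq_mul_sum_mul_prod_erase s a b c hD.1 hD.2 (hsum n), sub_self, mul_zero]
  have hP : P = 0 :=
    (mul_eq_zero.mp hDP).resolve_left ((monic_X_add_C a).mul (monic_prod_of_monic _ _
      fun i _ => monic_X_add_C (b i))).ne_zero
  have hPa := congrArg (eval (-a)) hP
  simp only [P, Q, eval_sub, eval_mul, eval_add, eval_X, eval_C, eval_prod, neg_add_cancel,
    zero_mul, sub_zero, eval_zero, prod_eq_zero_iff] at hPa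
  obtain ⟨i, hi, hba⟩ := hPa
  exact hab i hi (neg_add_eq_zero.mp hba).symm

end PartialFractions

namespace LinearRecurrence

variable {R : Type*} [CommRing R] (E : LinearRecurrence R) {u : ℕ → R}

theorem IsSolution.shift (hu : E.IsSolution u) : E.IsSolution fun n => u (n + 1) := fun n => by
  simpa only [add_right_comm n 1] using hu (n + 1)

theorem IsSolution.fwdDiff (hu : E.IsSolution u) : E.IsSolution fun n => u (n + 1) - u n := by
  rw [is_sol_iff_mem_solSpace] at hu ⊢
  exact E.solSpace.sub_mem ((E.is_sol_iff_mem_solSpace _).mp hu.shift) hu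

theorem not_isSolution_inv_natCast_add_one {K : Type*} [Field K] [CharZero K]
    (E : LinearRecurrence K) : ¬ E.IsSolution fun n : ℕ => ((n : K) + 1)⁻¹ := by
  intro hE
  refine not_forall_inv_add_eq_sum_mul_inv_add univ ((E.order : K) + 1)
    (fun i : Fin E.order => (i : K) + 1) E.coeffs (fun i _ => ?_) fun n => ?_
  · simpa using i.isLt.ne
  · simpa only [Nat.cast_add, add_assoc] using hE n

end LinearRecurrence

/-- The harmonic numbers are not C-finite over ℚ. -/
theorem harmonic_not_cfinite
    (h : ℕ → ℚ) (hh : ∀ n, h n = ∑ i ∈ Finset.range n, (1 : ℚ) / (i + 1)) :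
    ¬ ∃ d : ℕ, 1 ≤ d ∧ ∃ c : Fin d → ℚ,
      ∀ n : ℕ, h (n + d) = ∑ i : Fin d, c i * h (n + i) := by
  rintro ⟨d, -, c, hc⟩
  have hdiff : (fun n => h (n + 1) - h n) = fun n : ℕ => ((n : ℚ) + 1)⁻¹ := by
    ext n
    rw [hh, hh, sum_range_succ, add_sub_cancel_left, one_div]
  have hsol : (LinearRecurrence.mk d c).IsSolution fun n => h (n + 1) - h n :=
    LinearRecurrence.IsSolution.fwdDiff _ hc
  exact (LinearRecurrence.mk d c).not_isSolution_inv_natCast_add_one (hdiff ▸ hsol)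
end

section
/- The sequence n ↦ 1 + n! is not hypergeometric over ℚ: there is no rational function r ∈ ℚ(x) with 1 + (n+1)! = r(n)·(1 + n!) for all sufficiently large n. -/
open Filter

open Polynomial in
/-- The sequence 1 + n! is not hypergeometric over ℚ. -/
theorem one_add_factorial_not_hypergeometric :
    ¬ ∃ r : RatFunc ℚ, ∀ᶠ n : ℕ in atTop,
      (1 + (Nat.factorial (n + 1) : ℚ)) =
        r.eval (RingHom.id ℚ) (n : ℚ) * (1 + (Nat.factorial n : ℚ)) := by
  rintro ⟨r, hr⟩
  set p : ℚ[X] := r.num with hp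
  set q : ℚ[X] := r.denom with hqdef
  have hq : q ≠ 0 := r.denom_ne_zero
  have hcast : Tendsto (Nat.cast : ℕ → ℚ) atTop atTop := tendsto_natCast_atTop_atTop
  have hqev : ∀ᶠ n : ℕ in atTop, q.eval (n : ℚ) ≠ 0 :=
    hcast.eventually (q.eventually_no_roots hq)
  set P : ℚ[X] := (X + 1) * q - p with hPdef
  -- key identity: (1 + n!) * P(n) = n * q(n) eventually
  have hkey : ∀ᶠ n : ℕ in atTop,
      (1 + (Nat.factorial n : ℚ)) * P.eval (n : ℚ) = (n : ℚ) * q.eval (n : ℚ) := by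
    filter_upwards [hr, hqev] with n h1 h2
    have hev : r.eval (RingHom.id ℚ) (n : ℚ) = p.eval (n : ℚ) / q.eval (n : ℚ) := rfl
    rw [hev] at h1
    have hfs : Nat.factorial (n + 1) = (n + 1) * Nat.factorial n := Nat.factorial_succ n
    rw [hfs] at h1
    push_cast at h1
    simp only [hPdef, eval_sub, eval_mul, eval_add, eval_X, eval_one]
    field_simp at h1
    ring_nf
    ring_nf at h1
    linarith [h1]
  by_cases hP : P = 0
  · obtain ⟨n, hn1, hn2, hn3⟩ := (hkey.and (hqev.and (eventually_ge_atTop 1))).exists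
    rw [hP] at hn1
    simp at hn1
    rcases hn1 with h | h
    · exact absurd (by exact_mod_cast h) (by omega : ¬ n = 0)
    · exact hn2 h
  · -- the ratio (1 + (n+1)!)/(1 + n!) equals a rational function tending to 1
    have hPev : ∀ᶠ n : ℕ in atTop, P.eval (n : ℚ) ≠ 0 :=
      hcast.eventually (P.eventually_no_roots hP)
    have hX1deg : (X + 1 : ℚ[X]).natDegree = 1 := by compute_degree!
    have hX1lc : (X + 1 : ℚ[X]).leadingCoeff = 1 := by monicity!
    set q1 : ℚ[X] := q.comp (X + 1) with hq1
    set P1 : ℚ[X] := P.comp (X + 1) with hP1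
    have hq1lc : q1.leadingCoeff = q.leadingCoeff := by
      rw [hq1, leadingCoeff_comp (by rw [hX1deg]; norm_num)]
      rw [hX1lc, one_pow, mul_one]
    have hP1lc : P1.leadingCoeff = P.leadingCoeff := by
      rw [hP1, leadingCoeff_comp (by rw [hX1deg]; norm_num)]
      rw [hX1lc, one_pow, mul_one]
    have hq1ne : q1 ≠ 0 := fun h => hq (leadingCoeff_eq_zero.mp (by rw [← hq1lc, h, leadingCoeff_zero]))
    have hP1ne : P1 ≠ 0 := fun h => hP (leadingCoeff_eq_zero.mp (by rw [← hP1lc, h, leadingCoeff_zero]))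
    have hq1deg : q1.natDegree = q.natDegree := by
      rw [hq1, natDegree_comp, hX1deg, mul_one]
    have hP1deg : P1.natDegree = P.natDegree := by
      rw [hP1, natDegree_comp, hX1deg, mul_one]
    set N : ℚ[X] := (X + 1) * q1 * P with hN
    set D : ℚ[X] := X * q * P1 with hD
    have hX1ne : (X + 1 : ℚ[X]) ≠ 0 := fun h => by simpa [h] using hX1lc
    have hXne : (X : ℚ[X]) ≠ 0 := X_ne_zero
    have hNne : N ≠ 0 := mul_ne_zero (mul_ne_zero hX1ne hq1ne) hP
    have hDne : D ≠ 0 := mul_ne_zero (mul_ne_zero hXne hq) hP1ne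
    have hdeg : N.degree = D.degree := by
      rw [degree_eq_natDegree hNne, degree_eq_natDegree hDne]
      norm_cast
      rw [hN, hD, natDegree_mul (mul_ne_zero hX1ne hq1ne) hP,
        natDegree_mul hX1ne hq1ne, natDegree_mul (mul_ne_zero hXne hq) hP1ne,
        natDegree_mul hXne hq, hX1deg, natDegree_X, hq1deg, hP1deg]
    have hlc : N.leadingCoeff = D.leadingCoeff := by
      rw [hN, hD, leadingCoeff_mul, leadingCoeff_mul, leadingCoeff_mul, leadingCoeff_mul,
        hX1lc, leadingCoeff_X, hq1lc, hP1lc]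
    have htend : Tendsto (fun x : ℚ => N.eval x / D.eval x) atTop (nhds 1) := by
      have := div_tendsto_leadingCoeff_div_of_degree_eq N D hdeg
      rwa [hlc, div_self (leadingCoeff_ne_zero.mpr hDne)] at this
    have hlt : ∀ᶠ n : ℕ in atTop, N.eval (n : ℚ) / D.eval (n : ℚ) < 2 :=
      hcast.eventually (htend.eventually (gt_mem_nhds (by norm_num : (1:ℚ) < 2)))
    have hshift : ∀ᶠ n : ℕ in atTop,
        (1 + (Nat.factorial (n+1) : ℚ)) * P.eval ((n:ℚ)+1) = ((n:ℚ)+1) * q.eval ((n:ℚ)+1) := by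
      have := (tendsto_add_atTop_nat 1).eventually hkey
      filter_upwards [this] with n h
      push_cast at h
      convert h using 3 <;> push_cast <;> ring
    have hPev1 : ∀ᶠ n : ℕ in atTop, P.eval ((n:ℚ)+1) ≠ 0 := by
      have := (tendsto_add_atTop_nat 1).eventually hPev
      filter_upwards [this] with n h
      push_cast at h
      convert h using 2
    have hqev1 : ∀ᶠ n : ℕ in atTop, q.eval ((n:ℚ)+1) ≠ 0 := by
      have := (tendsto_add_atTop_nat 1).eventually hqev
      filter_upwards [this] with n h
      push_cast at h
      convert h using 2
    obtain ⟨n, h1, h2, h3, h4, h5, h6, h7, h8⟩ :=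
      (hkey.and (hshift.and (hqev.and (hqev1.and (hPev.and (hPev1.and
        (hlt.and (eventually_ge_atTop 3)))))))).exists
    -- unpack
    have hfac1 : (1:ℚ) ≤ (Nat.factorial n : ℚ) := by exact_mod_cast Nat.one_le_iff_ne_zero.mpr n.factorial_ne_zero
    have ha : (0:ℚ) < 1 + (Nat.factorial n : ℚ) := by linarith
    have ha1 : (0:ℚ) < 1 + (Nat.factorial (n+1) : ℚ) := by positivity
    -- eval of N and D at n
    have hNev : N.eval (n:ℚ) = ((n:ℚ)+1) * q.eval ((n:ℚ)+1) * P.eval (n:ℚ) := by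
      simp [hN, hq1, eval_comp]
    have hDev : D.eval (n:ℚ) = (n:ℚ) * q.eval (n:ℚ) * P.eval ((n:ℚ)+1) := by
      simp [hD, hP1, eval_comp]
    -- substitute the key identities
    rw [hNev, hDev, ← h2, ← h1] at h7
    -- h7 : (1+(n+1)!)·P(n+1)·P(n) / ((1+n!)·P(n)·P(n+1)) < 2
    have hratio : (1 + (Nat.factorial (n+1) : ℚ)) * P.eval ((n:ℚ)+1) * P.eval (n:ℚ) /
        ((1 + (Nat.factorial n : ℚ)) * P.eval (n:ℚ) * P.eval ((n:ℚ)+1)) =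
        (1 + (Nat.factorial (n+1) : ℚ)) / (1 + (Nat.factorial n : ℚ)) := by
      field_simp
    rw [hratio] at h7
    rw [div_lt_iff₀ ha] at h7
    -- but (n+1)! = (n+1) n! ≥ 4 n! ≥ 2(1+n!), contradiction with n ≥ 3
    have hn3 : (3:ℚ) ≤ (n:ℚ) := by exact_mod_cast h8
    have hfs : (Nat.factorial (n+1) : ℚ) = ((n:ℚ)+1) * (Nat.factorial n : ℚ) := by
      rw [Nat.factorial_succ]; push_cast; ring
    nlinarith [hfs, hfac1, hn3]
end

section
/- Let h : ℕ → K be a hypergeometric sequence with shift quotient q ∈ K(x), i.e., h(n+1) = q(n)h(n) for large n. If h agrees with a rational function sequence (i.e., h(n) = R(n) for some R ∈ K(x) and all large n), then q can be written in the form q(x) = g(x)f(x+1)/(g(x+1)f(x)) for some polynomials f, g ∈ K[x]. Consequently, every root of the numerator of q has a root of the denominator of q at integer distance. -/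
/-!
Write `R = f / g` in lowest terms. Since `R (n + 1) = q n * R n` for all large `n`, the polynomial
identity `q.num * (g(x+1) * f) = g * f(x+1) * q.denom` holds, which is the Gosper form.
If a root `α` of `q.num` had no root of `q.denom` on `α + ℤ`, comparing root multiplicities in
this identity along `α + ℤ` would make `z ↦ mult_{α+z} f - mult_{α+z} g` nondecreasing with a
strict jump at `z = 0`; but it vanishes for `|z|` large, since `f * g` has finitely many roots.
-/

open Filter Polynomial

theorem Monotone.eq_of_eventually_eq_atBot_atTop {α β : Type*} [Preorder α] [Nonempty α]
    [IsDirectedOrder α] [IsCodirectedOrder α] [PartialOrder β] {u : α → β} (hu : Monotone u)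
    {c : β} (hbot : ∀ᶠ x in atBot, u x = c) (htop : ∀ᶠ x in atTop, u x = c) (x : α) :
    u x = c := by
  obtain ⟨a, hac, hax⟩ := (hbot.and (eventually_le_atBot x)).exists
  obtain ⟨b, hbc, hxb⟩ := (htop.and (eventually_ge_atTop x)).exists
  exact le_antisymm (hbc ▸ hu hxb) (hac ▸ hu hax)

namespace Polynomial

variable {K : Type*} [Field K]

theorem rootMultiplicity_comp_X_add_one (p : K[X]) (a : K) :
    (p.comp (X + 1)).rootMultiplicity a = p.rootMultiplicity (a + 1) := by
  simpa using rootMultiplicity_comp_C_mul_X_add_C p 1 1 a isUnit_one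

theorem comp_X_add_one_ne_zero {p : K[X]} (hp : p ≠ 0) : p.comp (X + 1) ≠ 0 := by
  simpa using (comp_X_add_C_ne_zero_iff (t := (1 : K))).mpr hp

theorem eventually_cofinite_eval_ne_zero {ι : Type*} {φ : ι → K} (hφ : Function.Injective φ)
    {p : K[X]} (hp : p ≠ 0) : ∀ᶠ i in cofinite, p.eval (φ i) ≠ 0 := by
  simpa [eventually_cofinite, ← IsRoot.def] using (finite_setOfPred_isRoot hp).preimage hφ.injOn

theorem eventually_eval_natCast_ne_zero_s10 [CharZero K] {p : K[X]} (hp : p ≠ 0) :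
    ∀ᶠ n : ℕ in atTop, p.eval (n : K) ≠ 0 :=
  Nat.cofinite_eq_atTop ▸ eventually_cofinite_eval_ne_zero Nat.cast_injective hp

theorem eq_zero_of_eventually_eval_natCast_eq_zero [CharZero K] {p : K[X]}
    (h : ∀ᶠ n : ℕ in atTop, p.eval (n : K) = 0) : p = 0 := by
  by_contra hp
  obtain ⟨n, hn, hn'⟩ := (h.and (eventually_eval_natCast_ne_zero_s10 hp)).exists
  exact hn' hn

theorem rootMultiplicity_add_of_mul_comp_eq {N D f g : K[X]} (hD : D ≠ 0) (hf : f ≠ 0)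
    (hg : g ≠ 0) (key : N * (g.comp (X + 1) * f) = g * f.comp (X + 1) * D) (a : K) :
    N.rootMultiplicity a + g.rootMultiplicity (a + 1) + f.rootMultiplicity a =
      g.rootMultiplicity a + f.rootMultiplicity (a + 1) + D.rootMultiplicity a := by
  have hrhs : g * f.comp (X + 1) * D ≠ 0 := by
    simp [hD, hf, hg, comp_X_add_one_ne_zero]
  have hlhs := key ▸ hrhs
  have hprod := congrArg (rootMultiplicity a) key
  rw [rootMultiplicity_mul hlhs, rootMultiplicity_mul (right_ne_zero_of_mul hlhs),
    rootMultiplicity_mul hrhs, rootMultiplicity_mul (left_ne_zero_of_mul hrhs),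
    rootMultiplicity_comp_X_add_one, rootMultiplicity_comp_X_add_one] at hprod
  omega

theorem exists_isRoot_sub_eq_intCast_of_mul_comp_eq [CharZero K] {N D f g : K[X]} (hD : D ≠ 0)
    (hf : f ≠ 0) (hg : g ≠ 0) (key : N * (g.comp (X + 1) * f) = g * f.comp (X + 1) * D)
    {a : K} (ha : N.IsRoot a) : ∃ b, D.IsRoot b ∧ ∃ z : ℤ, a - b = z := by
  by_contra! hD_off
  have hN : N ≠ 0 := by
    rintro rfl
    simp [hD, hf, hg, comp_X_add_one_ne_zero] at key
  set u : ℤ → ℤ := fun z => (f.rootMultiplicity (a + z) : ℤ) - g.rootMultiplicity (a + z)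
  have hstep (z : ℤ) : u (z + 1) = u z + N.rootMultiplicity (a + z) := by
    have hDz : D.rootMultiplicity (a + z) = 0 :=
      rootMultiplicity_eq_zero fun h => hD_off _ h (-z) (by push_cast; ring)
    have := rootMultiplicity_add_of_mul_comp_eq hD hf hg key (a + z)
    simp only [u, Int.cast_add, Int.cast_one, ← add_assoc]
    omega
  have hmono : Monotone u := monotone_int_of_le_succ fun z => by rw [hstep]; omega
  have hfin : ∀ᶠ z in cofinite, u z = 0 := by
    refine (eventually_cofinite_eval_ne_zero ((add_right_injective a).comp Int.cast_injective)
      (mul_ne_zero hf hg)).mono fun z hz => ?_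
    simp only [Function.comp_apply, eval_mul, mul_ne_zero_iff] at hz
    simp [u, rootMultiplicity_eq_zero hz.1, rootMultiplicity_eq_zero hz.2]
  have hzero := hmono.eq_of_eventually_eq_atBot_atTop (hfin.filter_mono atBot_le_cofinite)
    (hfin.filter_mono atTop_le_cofinite)
  have h01 := hstep 0
  rw [hzero, hzero, Int.cast_zero, add_zero] at h01
  exact (rootMultiplicity_pos hN).mpr ha |>.ne' (by omega)

end Polynomial

namespace RatFunc

variable {K : Type*} [Field K]

theorem eq_mk_comp_X_add_one_of_eventually_eval_succ [CharZero K] {q R : RatFunc K}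
    (hR : R ≠ 0)
    (h : ∀ᶠ n : ℕ in atTop, R.eval (RingHom.id K) ((n + 1 : ℕ) : K) =
      q.eval (RingHom.id K) n * R.eval (RingHom.id K) n) :
    q = RatFunc.mk (R.denom * R.num.comp (Polynomial.X + 1))
      (R.denom.comp (Polynomial.X + 1) * R.num) := by
  rw [mk_eq_div, ← num_mul_eq_mul_denom_iff
    (mul_ne_zero (comp_X_add_one_ne_zero R.denom_ne_zero) (num_ne_zero hR)), ← sub_eq_zero]
  apply eq_zero_of_eventually_eval_natCast_eq_zero
  filter_upwards [h, eventually_eval_natCast_ne_zero_s10 q.denom_ne_zero,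
    eventually_eval_natCast_ne_zero_s10 R.denom_ne_zero,
    tendsto_add_atTop_nat 1 |>.eventually (eventually_eval_natCast_ne_zero_s10 R.denom_ne_zero)]
    with n hn hqn hRn hRn1
  push_cast at hn hRn1
  change R.num.eval _ / R.denom.eval _ = q.num.eval _ / q.denom.eval _ *
    (R.num.eval _ / R.denom.eval _) at hn
  field_simp at hn
  simp only [Polynomial.eval_sub, Polynomial.eval_mul, eval_comp, Polynomial.eval_add,
    Polynomial.eval_X, Polynomial.eval_one]
  linear_combination -hn

theorem exists_denom_root_sub_eq_intCast_of_eq_mk [CharZero K] {q : RatFunc K} {f g : K[X]}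
    (hf : f ≠ 0) (hg : g ≠ 0)
    (hq : q = RatFunc.mk (g * f.comp (Polynomial.X + 1)) (g.comp (Polynomial.X + 1) * f)) {a : K}
    (ha : q.num.eval a = 0) : ∃ b, q.denom.eval b = 0 ∧ ∃ z : ℤ, a - b = z :=
  exists_isRoot_sub_eq_intCast_of_mul_comp_eq q.denom_ne_zero hf hg
    ((num_mul_eq_mul_denom_iff (mul_ne_zero (comp_X_add_one_ne_zero hg) hf)).mpr
      (hq.trans (mk_eq_div _ _))) ha

end RatFunc

theorem rational_hypergeometric_shift_quotient_general
    {K : Type*} [Field K] [CharZero K]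
    (h : ℕ → K) (q : RatFunc K)
    (hrec : ∀ᶠ n : ℕ in atTop, h (n + 1) = q.eval (RingHom.id K) (n : K) * h n)
    (hnz : ∀ᶠ n : ℕ in atTop, h n ≠ 0)
    (R : RatFunc K) (hR : ∀ᶠ n : ℕ in atTop, h n = R.eval (RingHom.id K) (n : K)) :
    (∃ f g : Polynomial K, f ≠ 0 ∧ g ≠ 0 ∧
        q = RatFunc.mk (g * f.comp (Polynomial.X + 1)) (g.comp (Polynomial.X + 1) * f)) ∧
    (∀ α : K, q.num.eval α = 0 →
        ∃ β : K, q.denom.eval β = 0 ∧ ∃ z : ℤ, α - β = (z : K)) := by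
  have hR0 : R ≠ 0 := by
    rintro rfl
    obtain ⟨n, hn, hn0⟩ := (hnz.and hR).exists
    exact hn (hn0.trans (RatFunc.eval_zero _ _))
  have hq : q = RatFunc.mk (R.denom * R.num.comp (X + 1)) (R.denom.comp (X + 1) * R.num) := by
    refine RatFunc.eq_mk_comp_X_add_one_of_eventually_eval_succ hR0 ?_
    filter_upwards [hrec, hR, tendsto_add_atTop_nat 1 |>.eventually hR] with n hn hRn hRn1
    rw [← hRn, ← hRn1, hn]
  exact ⟨⟨R.num, R.denom, RatFunc.num_ne_zero hR0, R.denom_ne_zero, hq⟩,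
    fun _ ↦ RatFunc.exists_denom_root_sub_eq_intCast_of_eq_mk (RatFunc.num_ne_zero hR0)
      R.denom_ne_zero hq⟩

/-- If a hypergeometric sequence agrees with a rational-function sequence, then its shift
quotient has the Gosper form g(x)f(x+1)/(g(x+1)f(x)); consequently every root of its
numerator has a root of its denominator at integer distance. -/
theorem rational_hypergeometric_shift_quotient
    {K : Type*} [Field K] [IsAlgClosed K] [CharZero K]
    (h : ℕ → K) (q : RatFunc K) (hq : q ≠ 0)
    (hrec : ∀ᶠ n : ℕ in atTop, h (n + 1) = q.eval (RingHom.id K) (n : K) * h n)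
    (hnz : ∀ᶠ n : ℕ in atTop, h n ≠ 0)
    (R : RatFunc K) (hR : ∀ᶠ n : ℕ in atTop, h n = R.eval (RingHom.id K) (n : K)) :
    (∃ f g : Polynomial K, f ≠ 0 ∧ g ≠ 0 ∧
        q = RatFunc.mk (g * f.comp (Polynomial.X + 1)) (g.comp (Polynomial.X + 1) * f)) ∧
    (∀ α : K, q.num.eval α = 0 →
        ∃ β : K, q.denom.eval β = 0 ∧ ∃ z : ℤ, α - β = (z : K)) :=
  rational_hypergeometric_shift_quotient_general h q hrec hnz R hR
end
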